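/- Let K > max{4, (1+R)/(1-R)} with 0 < R < 1, and let Λ ⊂ ℝ^d be a set such that for every x with |x| < 1 the ball B(x, R(1-|x|)) contains at least one point of Λ. Then for every j ≥ 2 and every x with |x| = 1 - K^{-(j-1)}, there exists λ_x ∈ Λ lying in the annulus {y : 1 - K^{-(j-1)} ≤ |y| ≤ 1 - K^{-j}} such that |x - λ_x| ≤ ((K-1)/K) · |x* - λ_x|, where x* = (ρ_{j+1}²/|x|²) x and ρ_{j+1} = 1 - K^{-(j+1)}. -/

import Mathlib

/-!
Write `v = K^{-(j+1)}`, so that `|x| = 1 - K²v` and the annulus is `1 - K²v ≤ |y| ≤ 1 - Kv`.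
Take the point `z` on the ray through `x` with `|z|` the midpoint `1 - (K+1)Kv/2` of the annulus.
Density gives `λ ∈ Λ` with `|z - λ| < R(K+1)Kv/2 ≤ (K-1)Kv/2`, the half-width of the annulus
(this is `K ≥ (1+R)/(1-R)`), so `λ` lies in the annulus. Along the ray, `x` is at distance
`(K-1)Kv/2` from `z` and `x*` at distance at least `(K-1)(3K+4)v/2`, because
`|x*| = (1-v)²/(1-K²v) ≥ 1 + K²v - 2v`. The triangle inequality then gives
`|x - λ| ≤ (K-1)Kv` and `|x* - λ| ≥ (K-1)(K+2)v`, and `K² ≤ (K-1)(K+2)` once `K ≥ 2`.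
-/

lemma sub_add_le_mul_inversion_sub_sub {K v r : ℝ} (hK : 2 ≤ K) (hv : 0 ≤ v) (hKv : K ^ 2 * v < 1)
    (hr : r ≤ (K - 1) * K * v / 2) :
    1 - (K + 1) * K * v / 2 - (1 - K ^ 2 * v) + r ≤
      (K - 1) / K * ((1 - v) ^ 2 / (1 - K ^ 2 * v) - (1 - (K + 1) * K * v / 2) - r) := by
  have hb : 1 + K ^ 2 * v - 2 * v ≤ (1 - v) ^ 2 / (1 - K ^ 2 * v) := by
    rw [le_div_iff₀ (by linarith)]
    nlinarith [sq_nonneg (v * (K ^ 2 - 1))]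
  rw [div_mul_eq_mul_div, le_div_iff₀ (by linarith)]
  nlinarith [mul_nonneg (mul_nonneg (sub_nonneg.2 hK) (by linarith : (0:ℝ) ≤ K - 1)) hv]

lemma norm_smul_sub_le_mul_norm_smul_sub {E : Type*} [NormedAddCommGroup E] [NormedSpace ℝ E]
    {u l : E} (hu : ‖u‖ = 1) {a b s r c : ℝ} (hl : dist (s • u) l ≤ r) (has : a ≤ s) (hc : 0 ≤ c)
    (h : s - a + r ≤ c * (b - s - r)) : ‖a • u - l‖ ≤ c * ‖b • u - l‖ := by
  have hdist (p q : ℝ) : dist (p • u) (q • u) = |p - q| := by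
    rw [dist_eq_norm, ← sub_smul, norm_smul, hu, mul_one, Real.norm_eq_abs]
  have upper : ‖a • u - l‖ ≤ s - a + r := by
    rw [← dist_eq_norm]
    calc dist (a • u) l ≤ dist (a • u) (s • u) + dist (s • u) l := dist_triangle _ _ _
      _ ≤ s - a + r := by rw [hdist, abs_sub_comm, abs_of_nonneg (sub_nonneg.2 has)]; linarith
  have lower : b - s - r ≤ ‖b • u - l‖ := by
    rw [← dist_eq_norm]
    have := dist_triangle (b • u) l (s • u)
    rw [hdist, dist_comm l] at this
    linarith [le_abs_self (b - s)]
  linarith [mul_le_mul_of_nonneg_left lower hc]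

theorem exists_mem_annulus_norm_sub_le_mul_norm_inversion_sub {E : Type*} [NormedAddCommGroup E]
    [NormedSpace ℝ E] {R K v : ℝ} (hK : 2 ≤ K) (hRK : R * (K + 1) ≤ K - 1) (hv : 0 < v)
    (hKv : K ^ 2 * v < 1) (Λ : Set E)
    (hdense : ∀ x : E, ‖x‖ < 1 → ∃ l ∈ Λ, dist x l < R * (1 - ‖x‖))
    {x : E} (hx : ‖x‖ = 1 - K ^ 2 * v) :
    ∃ l ∈ Λ, (1 - K ^ 2 * v ≤ ‖l‖ ∧ ‖l‖ ≤ 1 - K * v) ∧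
      ‖x - l‖ ≤ (K - 1) / K * ‖((1 - v) ^ 2 / ‖x‖ ^ 2) • x - l‖ := by
  have hx0 : 0 < ‖x‖ := by linarith
  set u : E := ‖x‖⁻¹ • x
  have hu : ‖u‖ = 1 := norm_smul_inv_norm (𝕜 := ℝ) (norm_pos_iff.1 hx0)
  have hxu : x = ‖x‖ • u := by simp only [u, smul_smul, mul_inv_cancel₀ hx0.ne', one_smul]
  have hinv : ((1 - v) ^ 2 / ‖x‖ ^ 2) • x = ((1 - v) ^ 2 / ‖x‖) • u := by
    rw [hxu, smul_smul, norm_smul, hu, mul_one, Real.norm_of_nonneg hx0.le]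
    congr 1; field_simp
  set s := 1 - (K + 1) * K * v / 2 with hs
  have hKKv : 0 < (K + 1) * K * v := by positivity
  have hsu : ‖s • u‖ = s := by
    rw [norm_smul, hu, mul_one, Real.norm_of_nonneg (by nlinarith [hs])]
  obtain ⟨l, hlΛ, hl⟩ := hdense (s • u) (by rw [hsu]; linarith [hs])
  rw [hsu] at hl
  have hr : R * (1 - s) ≤ (K - 1) * K * v / 2 := by
    simp only [s]; nlinarith [mul_le_mul_of_nonneg_right hRK (by positivity : 0 ≤ K * v)]
  have hnorm := abs_norm_sub_norm_le l (s • u)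
  rw [← dist_eq_norm, dist_comm, hsu, abs_le] at hnorm
  refine ⟨l, hlΛ, ⟨by linarith [hs], by linarith [hs]⟩, ?_⟩
  rw [hinv]
  nth_rewrite 1 [hxu]
  exact norm_smul_sub_le_mul_norm_smul_sub hu hl.le (by nlinarith [hs])
    (div_nonneg (by linarith) (by linarith))
    (by rw [hx]; exact sub_add_le_mul_inversion_sub_sub hK hv.le hKv hr)

theorem stmt5_general (d : ℕ) (R K : ℝ) (hR1 : R < 1)
    (hK : max 4 ((1 + R) / (1 - R)) < K)
    (Λ : Set (EuclideanSpace ℝ (Fin d)))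
    (hdense : ∀ x : EuclideanSpace ℝ (Fin d), ‖x‖ < 1 → ∃ l ∈ Λ, dist x l < R * (1 - ‖x‖)) :
    ∀ j : ℕ, 2 ≤ j → ∀ x : EuclideanSpace ℝ (Fin d), ‖x‖ = 1 - K ^ (-(j:ℤ) + 1) →
      ∃ lx ∈ Λ,
        (1 - K ^ (-(j:ℤ) + 1) ≤ ‖lx‖ ∧ ‖lx‖ ≤ 1 - K ^ (-(j:ℤ))) ∧
        ‖x - lx‖ ≤ (K - 1) / K * ‖((1 - K ^ (-(j:ℤ) - 1)) ^ 2 / ‖x‖ ^ 2) • x - lx‖ := by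
  intro j hj x hx
  have hK4 : 4 < K := (le_max_left _ _).trans_lt hK
  have hRK : R * (K + 1) ≤ K - 1 := by
    have := (le_max_right _ _).trans_lt hK
    rw [div_lt_iff₀ (by linarith)] at this
    linarith
  have hK0 : K ≠ 0 := (by linarith : (0:ℝ) < K).ne'
  have hKj : K ^ (-(j:ℤ)) = K * K ^ (-(j:ℤ) - 1) := by
    rw [← zpow_one_add₀ hK0]; ring_nf
  have hKj1 : K ^ (-(j:ℤ) + 1) = K ^ 2 * K ^ (-(j:ℤ) - 1) := by
    rw [← zpow_natCast, ← zpow_add₀ hK0]; ring_nf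
  have hlt : K ^ (-(j:ℤ) + 1) < 1 := zpow_lt_one_of_neg₀ (by linarith) (by omega)
  rw [hKj1] at hx hlt ⊢
  rw [hKj]
  exact exists_mem_annulus_norm_sub_le_mul_norm_inversion_sub (by linarith) hRK
    (zpow_pos (by linarith) _) hlt Λ hdense hx

theorem stmt5 (d : ℕ) (R K : ℝ) (hR0 : 0 < R) (hR1 : R < 1)
    (hK : max 4 ((1 + R) / (1 - R)) < K)
    (Λ : Set (EuclideanSpace ℝ (Fin d)))
    (hdense : ∀ x : EuclideanSpace ℝ (Fin d), ‖x‖ < 1 → ∃ l ∈ Λ, dist x l < R * (1 - ‖x‖)) :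
    ∀ j : ℕ, 2 ≤ j → ∀ x : EuclideanSpace ℝ (Fin d), ‖x‖ = 1 - K ^ (-(j:ℤ) + 1) →
      ∃ lx ∈ Λ,
        (1 - K ^ (-(j:ℤ) + 1) ≤ ‖lx‖ ∧ ‖lx‖ ≤ 1 - K ^ (-(j:ℤ))) ∧
        ‖x - lx‖ ≤ (K - 1) / K * ‖((1 - K ^ (-(j:ℤ) - 1)) ^ 2 / ‖x‖ ^ 2) • x - lx‖ :=
  stmt5_general d R K hR1 hK Λ hdense
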